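/- Let F₂(z,z̄,u) = Σ_{α,β} h_{αβ̄} z^α conj(z^β) + Q(z) + conj(Q(z)) + c·u, where h is a Hermitian n×n matrix (h_{βᾱ} = conj(h_{αβ̄})), Q is a holomorphic homogeneous quadratic polynomial on ℂ^n, and c ∈ ℝ. Let C be an n×n complex matrix and let g₂(z,w) = q(z) + λw with q a holomorphic homogeneous quadratic polynomial and λ ∈ ℂ. Suppose that for all z ∈ ℂ^n and u ∈ ℝ: Im g₂(z, u + iF₂(z,z̄,u)) = ⟨Cz,Cz⟩. Then: (1) ⟨Cz,Cz⟩ = (Re λ)·Σ_{α,β} h_{αβ̄} z^α conj(z^β) for all z; (2) λ = (Re λ)(1 − ic); and (3) q(z) = −2i(Re λ)·Q(z) for all z. -/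
import Mathlib


open Complex Matrix

/-- The Hermitian form `⟨z,ζ⟩ = Σ_{α<e} z^α conj(ζ^α) − Σ_{α≥e} z^α conj(ζ^α)`
of signature `(e, n-e)` on `ℂ^n`. -/
noncomputable def herm (n e : ℕ) (z ζ : Fin n → ℂ) : ℂ :=
  ∑ α : Fin n, (if (α : ℕ) < e then (1 : ℂ) else -1) * z α * (starRingEnd ℂ) (ζ α)

/-- The holomorphic quadratic polynomial `z ↦ Σ_{α,β} Q_{αβ} z^α z^β`. -/
noncomputable def quadPoly (n : ℕ) (Q : Matrix (Fin n) (Fin n) ℂ) (z : Fin n → ℂ) : ℂ :=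
  ∑ α : Fin n, ∑ β : Fin n, Q α β * z α * z β

/-- The Hermitian part `z ↦ Σ_{α,β} h_{αβ̄} z^α conj(z^β)`. -/
noncomputable def hermPoly (n : ℕ) (h : Matrix (Fin n) (Fin n) ℂ) (z : Fin n → ℂ) : ℂ :=
  ∑ α : Fin n, ∑ β : Fin n, h α β * z α * (starRingEnd ℂ) (z β)

/-- `F₂(z,z̄,u) = Σ h_{αβ̄} z^α conj(z^β) + Q(z) + conj(Q(z)) + c·u`. -/
noncomputable def F2poly (n : ℕ) (h Q : Matrix (Fin n) (Fin n) ℂ) (c : ℝ)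
    (z : Fin n → ℂ) (u : ℝ) : ℂ :=
  hermPoly n h z + quadPoly n Q z + (starRingEnd ℂ) (quadPoly n Q z) + (c : ℂ) * (u : ℂ)

lemma im_eq_aux (T K : ℂ) (hTK : ((T.im : ℂ)) = K) :
    T - (starRingEnd ℂ) T = 2 * Complex.I * K := by
  rw [← hTK, Complex.sub_conj]
  push_cast
  ring

lemma quadPoly_smul (n : ℕ) (M : Matrix (Fin n) (Fin n) ℂ) (t : ℂ) (z : Fin n → ℂ) :
    quadPoly n M (t • z) = t ^ 2 * quadPoly n M z := by
  simp only [quadPoly, Pi.smul_apply, smul_eq_mul, Finset.mul_sum]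
  refine Finset.sum_congr rfl fun α _ => Finset.sum_congr rfl fun β _ => ?_
  ring

lemma hermPoly_smul (n : ℕ) (M : Matrix (Fin n) (Fin n) ℂ) (t : ℂ) (z : Fin n → ℂ) :
    hermPoly n M (t • z) = (t * (starRingEnd ℂ) t) * hermPoly n M z := by
  simp only [hermPoly, Pi.smul_apply, smul_eq_mul, _root_.map_mul, Finset.mul_sum]
  refine Finset.sum_congr rfl fun α _ => Finset.sum_congr rfl fun β _ => ?_
  ring

lemma herm_smul (n e : ℕ) (t : ℂ) (w : Fin n → ℂ) :
    herm n e (t • w) (t • w) = (t * (starRingEnd ℂ) t) * herm n e w w := by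
  simp only [herm, Pi.smul_apply, smul_eq_mul, _root_.map_mul, Finset.mul_sum]
  refine Finset.sum_congr rfl fun α _ => ?_
  ring

lemma quadPoly_zero (n : ℕ) (M : Matrix (Fin n) (Fin n) ℂ) :
    quadPoly n M (0 : Fin n → ℂ) = 0 := by
  simp [quadPoly]

lemma hermPoly_zero (n : ℕ) (M : Matrix (Fin n) (Fin n) ℂ) :
    hermPoly n M (0 : Fin n → ℂ) = 0 := by
  simp [hermPoly]

lemma herm_zero (n e : ℕ) : herm n e (0 : Fin n → ℂ) 0 = 0 := by
  simp [herm]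

lemma conj_hermPoly (n : ℕ) (h : Matrix (Fin n) (Fin n) ℂ)
    (hherm : ∀ α β : Fin n, h β α = (starRingEnd ℂ) (h α β)) (z : Fin n → ℂ) :
    (starRingEnd ℂ) (hermPoly n h z) = hermPoly n h z := by
  simp only [hermPoly, map_sum, _root_.map_mul, Complex.conj_conj]
  rw [Finset.sum_comm]
  refine Finset.sum_congr rfl fun x _ => Finset.sum_congr rfl fun y _ => ?_
  rw [hherm y x]
  ring

/-- If `g₂(z,w) = q(z) + λw` satisfies
`Im g₂(z, u + iF₂(z,z̄,u)) = ⟨Cz,Cz⟩` for all `z, u`, where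
`F₂ = Σ h_{αβ̄} z^α conj(z^β) + Q(z) + conj Q(z) + cu` with `h` Hermitian, then
`⟨Cz,Cz⟩ = (Re λ)·Σ h_{αβ̄} z^α conj(z^β)`, `λ = (Re λ)(1 − ic)`, and
`q(z) = −2i(Re λ)·Q(z)`. -/
theorem stmt9 (n e : ℕ) (hn : 1 ≤ n) (he1 : n ≤ 2 * e) (he2 : e ≤ n)
    (h : Matrix (Fin n) (Fin n) ℂ)
    (hherm : ∀ α β : Fin n, h β α = (starRingEnd ℂ) (h α β))
    (Q : Matrix (Fin n) (Fin n) ℂ) (c : ℝ)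
    (C : Matrix (Fin n) (Fin n) ℂ)
    (q : Matrix (Fin n) (Fin n) ℂ) (lam : ℂ)
    (hyp : ∀ (z : Fin n → ℂ) (u : ℝ),
      ((quadPoly n q z
          + lam * ((u : ℂ) + Complex.I * F2poly n h Q c z u)).im : ℂ)
        = herm n e (C.mulVec z) (C.mulVec z)) :
    (∀ z : Fin n → ℂ,
        herm n e (C.mulVec z) (C.mulVec z) = (lam.re : ℂ) * hermPoly n h z) ∧
    lam = (lam.re : ℂ) * (1 - Complex.I * (c : ℂ)) ∧
    (∀ z : Fin n → ℂ,
        quadPoly n q z = -2 * Complex.I * (lam.re : ℂ) * quadPoly n Q z) := by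
  -- Step 1: the relation for lam, from z = 0, u = 1.
  have h01 := hyp 0 1
  simp only [quadPoly_zero, hermPoly_zero, map_zero, F2poly, Matrix.mulVec_zero, herm_zero,
    Complex.ofReal_one, zero_add, add_zero, mul_one] at h01
  have him : (lam * (1 + Complex.I * (c : ℂ))).im = 0 := by
    exact_mod_cast h01
  have hre : (lam * (1 + Complex.I * (c : ℂ))).im = lam.im + lam.re * c := by
    simp [Complex.mul_im, Complex.add_im, Complex.add_re, Complex.mul_re]
    ring
  have hlamim : lam.im = -(lam.re * c) := by rw [hre] at him; linarith
  have hlam : lam = (lam.re : ℂ) * (1 - Complex.I * (c : ℂ)) := by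
    apply Complex.ext <;> simp [Complex.mul_re, Complex.mul_im, hlamim]
  refine ⟨fun z => ?_, hlam, fun z => ?_⟩ <;>
  · -- common setup for both remaining goals
    have hHc := conj_hermPoly n h hherm z
    have inst : ∀ t : ℂ,
        (t ^ 2 * quadPoly n q z
            + lam * (Complex.I * ((t * (starRingEnd ℂ) t) * hermPoly n h z
              + t ^ 2 * quadPoly n Q z + (starRingEnd ℂ) (t ^ 2 * quadPoly n Q z))))
          - (starRingEnd ℂ) (t ^ 2 * quadPoly n q z
            + lam * (Complex.I * ((t * (starRingEnd ℂ) t) * hermPoly n h z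
              + t ^ 2 * quadPoly n Q z + (starRingEnd ℂ) (t ^ 2 * quadPoly n Q z))))
          = 2 * Complex.I * ((t * (starRingEnd ℂ) t)
              * herm n e (C.mulVec z) (C.mulVec z)) := by
      intro t
      refine im_eq_aux _ _ ?_
      have := hyp (t • z) 0
      simpa only [F2poly, quadPoly_smul, hermPoly_smul, Matrix.mulVec_smul, herm_smul,
        Complex.ofReal_zero, mul_zero, add_zero, zero_add] using this
    have f0 := inst 1
    have f1 := inst Complex.I
    have f2 := inst (1 + Complex.I)
    rw [hlam] at f0 f1 f2
    simp only [_root_.map_add, _root_.map_mul, _root_.map_one, _root_.map_sub, _root_.map_neg, Complex.conj_I, Complex.conj_ofReal,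
      Complex.conj_conj, _root_.map_pow, hHc, map_ofNat] at f0 f1 f2
    first
    | linear_combination (Complex.I / 4) * f0 + (Complex.I / 4) * f1
        + ((-Complex.I / 4) * quadPoly n q z
            + (Complex.I / 4) * (starRingEnd ℂ) (quadPoly n q z)
            + (lam.re : ℂ) * (-(Complex.I ^ 2) / 2)
                * (quadPoly n Q z + (starRingEnd ℂ) (quadPoly n Q z))
            + (lam.re : ℂ) * (Complex.I ^ 2 / 2 - 1) * hermPoly n h z
            + (1 - Complex.I ^ 2 / 2) * herm n e (C.mulVec z) (C.mulVec z)) * Complex.I_sq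
    | linear_combination ((1 + Complex.I) / 4) * f0 + ((-1 + Complex.I) / 4) * f1
        + (-Complex.I / 4) * f2
        + ((3 / 4 : ℂ) * quadPoly n q z
            + (1 / 4 : ℂ) * (starRingEnd ℂ) (quadPoly n q z)
            + (lam.re : ℂ) * (3 * Complex.I / 2) * quadPoly n Q z
            + (lam.re : ℂ) * (-Complex.I / 2) * (starRingEnd ℂ) (quadPoly n Q z)
            + (lam.re : ℂ) * (-Complex.I / 2) * hermPoly n h z
            + (Complex.I / 2) * herm n e (C.mulVec z) (C.mulVec z)) * Complex.I_sq
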